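/- For a monic polynomial P of degree n with distinct real roots x₁,…,x_n and any polynomial Q of degree at most n, the determinant of the full Bezout matrix satisfies det B(P,Q) = (−1)^{n(n−1)/2} · Π_{i=1}^n Q(x_i); in particular det B(P,Q) = 0 if and only if P and Q share a root. -/

import Mathlib

open Polynomial

/-- The quotient polynomial `(P(x)Q(y) - P(y)Q(x))/(x - y)` in `R[y][x]`. -/
noncomputable def bezPoly {R : Type*} [CommRing R] (P Q : R[X]) :
    Polynomial (Polynomial R) :=
  (P.map C * C Q - C P * Q.map C) /ₘ (X - C X)

/-- The `n × n` Bezout matrix: `bezMat n P Q i j` is the coefficient of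
`x^i y^j` in `(P(x)Q(y) - P(y)Q(x))/(x - y)` (`0`-based indexing, so it is
the entry `b_{i+1, j+1}` of the paper). -/
noncomputable def bezMat {R : Type*} [CommRing R] (n : ℕ) (P Q : R[X]) :
    Matrix (Fin n) (Fin n) R :=
  fun i j => ((bezPoly P Q).coeff i).coeff j

/-!
Let `V` be the Vandermonde matrix of the roots `xᵢ`. The `(i, j)` entry of `V B Vᵀ` is the
Bezoutian `B(x, y) = (P(x)Q(y) - P(y)Q(x))/(x - y)` evaluated at `(xᵢ, xⱼ)`: for `i ≠ j` it
vanishes because `P(xᵢ) = P(xⱼ) = 0`, and on the diagonal it is `P'(xᵢ) Q(xᵢ)`. Hence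
`det(V)² det B = ∏ P'(xᵢ) Q(xᵢ)`, and `∏ᵢ P'(xᵢ) = ∏_{i ≠ j} (xᵢ - xⱼ) = (-1)^{n(n-1)/2} det(V)²`.
Identifying `V B Vᵀ` with these evaluations needs all monomials of `B` to have degree `< n` in
each variable; the bound in `x` is a degree count and the bound in `y` follows from the symmetry
`B(x, y) = B(y, x)`.
-/

open Finset Matrix Polynomial.Bivariate

theorem coeff_coeff_swap {R : Type*} [CommRing R] (p : R[X][Y]) (k l : ℕ) :
    ((swap p).coeff k).coeff l = (p.coeff l).coeff k := by
  induction p using Polynomial.induction_on' with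
  | add p q hp hq => simp only [map_add, coeff_add, hp, hq]
  | monomial i a =>
    induction a using Polynomial.induction_on' with
    | add a b ha hb => simp only [map_add, coeff_add, ha, hb]
    | monomial j r =>
      rw [swap_monomial_monomial]
      simp only [coeff_monomial]
      split_ifs <;> simp_all [coeff_monomial]

theorem evalEval_eq_sum_fin {R : Type*} [CommRing R] {n : ℕ} (p : R[X][Y])
    (hp : p.natDegree < n) (hc : ∀ k, (p.coeff k).natDegree < n) (x y : R) :
    p.evalEval y x
      = ∑ k : Fin n, ∑ l : Fin n, x ^ (k : ℕ) * (p.coeff k).coeff l * y ^ (l : ℕ) := by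
  rw [evalEval, eval_eq_sum_range' hp, eval_finsetSum, ← Fin.sum_univ_eq_sum_range]
  refine sum_congr rfl fun k _ => ?_
  rw [eval_mul, eval_pow, eval_C, eval_eq_sum_range' (hc k), ← Fin.sum_univ_eq_sum_range,
    sum_mul]
  refine sum_congr rfl fun l _ => ?_
  ring

section CommRing

variable {R : Type*} [CommRing R]

theorem X_sub_C_X_mul_bezPoly (P Q : R[X]) :
    (X - C X) * bezPoly P Q = P.map C * C Q - C P * Q.map C := by
  refine mul_divByMonic_eq_iff_isRoot.mpr ?_
  simp [IsRoot, eval_map, mul_comm]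

theorem sub_mul_evalEval_bezPoly (P Q : R[X]) (a b : R) :
    (b - a) * (bezPoly P Q).evalEval a b = P.eval b * Q.eval a - P.eval a * Q.eval b := by
  simpa [evalEval_mul, evalEval_sub, evalEval_C, evalEval_map_C, evalEval_X] using
    congrArg (evalEval a b) (X_sub_C_X_mul_bezPoly P Q)

theorem swap_bezPoly (P Q : R[X]) : swap (bezPoly P Q) = bezPoly P Q := by
  have h := congrArg swap (X_sub_C_X_mul_bezPoly P Q)
  simp only [map_mul, map_sub, swap_Y, swap_C, swap_map_C, map_X] at h
  refine sub_eq_zero.mp <| (monic_X_sub_C (X : R[X])).mul_right_eq_zero_iff.mp ?_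
  linear_combination -h - X_sub_C_X_mul_bezPoly P Q

theorem natDegree_bezPoly_lt {n : ℕ} {P Q : R[X]} (hn : 0 < n) (hP : P.natDegree ≤ n)
    (hQ : Q.natDegree ≤ n) : (bezPoly P Q).natDegree < n := by
  cases subsingleton_or_nontrivial R
  · rwa [natDegree_of_subsingleton]
  have hnum : (P.map C * C Q - C P * Q.map C).natDegree ≤ n := by
    refine (natDegree_sub_le _ _).trans (max_le ?_ ?_) <;> refine natDegree_mul_le.trans ?_
    · simpa only [natDegree_C, add_zero] using natDegree_map_le.trans hP
    · simpa only [natDegree_C, zero_add] using natDegree_map_le.trans hQ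
  rw [bezPoly, natDegree_divByMonic _ (monic_X_sub_C _), natDegree_X_sub_C]
  omega

theorem natDegree_coeff_bezPoly_lt {n : ℕ} {P Q : R[X]} (hn : 0 < n) (hP : P.natDegree ≤ n)
    (hQ : Q.natDegree ≤ n) (k : ℕ) : ((bezPoly P Q).coeff k).natDegree < n := by
  suffices ((bezPoly P Q).coeff k).natDegree ≤ n - 1 by omega
  refine natDegree_le_iff_coeff_eq_zero.mpr fun l hl => ?_
  rw [← swap_bezPoly, coeff_coeff_swap,
    coeff_eq_zero_of_natDegree_lt ((natDegree_bezPoly_lt hn hP hQ).trans_le (by omega)),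
    coeff_zero]

theorem vandermonde_mul_bezMat_mul_transpose_apply {n : ℕ} {P Q : R[X]} (hP : P.natDegree ≤ n)
    (hQ : Q.natDegree ≤ n) (v : Fin n → R) (i j : Fin n) :
    (vandermonde v * bezMat n P Q * (vandermonde v)ᵀ) i j
      = (bezPoly P Q).evalEval (v j) (v i) := by
  rw [evalEval_eq_sum_fin _ (natDegree_bezPoly_lt i.pos hP hQ)
    (natDegree_coeff_bezPoly_lt i.pos hP hQ)]
  simp only [mul_apply, vandermonde_apply, transpose_apply, bezMat, sum_mul]
  exact sum_comm

theorem evalEval_bezPoly_self_of_isRoot {P : R[X]} (Q : R[X]) {a : R} (ha : P.IsRoot a) :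
    (bezPoly P Q).evalEval a a = (derivative P).eval a * Q.eval a := by
  obtain ⟨S, hS⟩ := dvd_iff_isRoot.mpr ha
  have hderiv : (derivative P).eval a = S.eval a := by simp [hS, derivative_mul]
  have h := congrArg (eval (C a)) (X_sub_C_X_mul_bezPoly P Q)
  simp only [eval_mul, eval_sub, eval_X, eval_C, eval_map, eval₂_at_apply, ha.eq_zero, map_zero,
    zero_mul, zero_sub] at h
  have hrow : (bezPoly P Q).eval (C a) = S * C (Q.eval a) := by
    refine sub_eq_zero.mp <| (monic_X_sub_C a).mul_right_eq_zero_iff.mp ?_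
    linear_combination -h + C (Q.eval a) * hS
  rw [evalEval, hrow, eval_mul, eval_C, hderiv]

end CommRing

theorem Fin.sum_card_Ioi (n : ℕ) : ∑ i : Fin n, #(Ioi i) = n * (n - 1) / 2 := by
  simp only [Fin.card_Ioi]
  rw [Fin.sum_univ_eq_sum_range (fun i => n - 1 - i), sum_range_reflect (fun i => i) n,
    sum_range_id]

theorem prod_prod_erase_sub_eq_det_vandermonde_sq {R : Type*} [CommRing R] {n : ℕ}
    (v : Fin n → R) :
    ∏ i, ∏ j ∈ univ.erase i, (v i - v j)
      = (-1) ^ (n * (n - 1) / 2) * (vandermonde v).det ^ 2 := by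
  calc ∏ i, ∏ j ∈ univ.erase i, (v i - v j)
      = ∏ i, ∏ j ∈ Ioi i, ((v i - v j) * (v j - v i)) := by
        simp only [← compl_singleton]
        exact (prod_prod_Ioi_mul_eq_prod_prod_off_diag fun a b => v b - v a).symm
    _ = ∏ i, ∏ j ∈ Ioi i, ((-1) * (v j - v i) ^ 2) :=
        prod_congr rfl fun _ _ => prod_congr rfl fun _ _ => by ring
    _ = (-1) ^ (∑ i : Fin n, #(Ioi i)) * (∏ i, ∏ j ∈ Ioi i, (v j - v i)) ^ 2 := by
        simp only [prod_mul_distrib, prod_const, prod_pow, prod_pow_eq_pow_sum]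
    _ = (-1) ^ (n * (n - 1) / 2) * (vandermonde v).det ^ 2 := by
        rw [Fin.sum_card_Ioi, det_vandermonde]

section IsDomain

variable {R : Type*} [CommRing R] [IsDomain R]

theorem evalEval_bezPoly_of_isRoot_of_ne {P : R[X]} (Q : R[X]) {a b : R} (ha : P.IsRoot a)
    (hb : P.IsRoot b) (hab : a ≠ b) : (bezPoly P Q).evalEval a b = 0 := by
  have h := sub_mul_evalEval_bezPoly P Q a b
  simp only [ha.eq_zero, hb.eq_zero, zero_mul, sub_zero] at h
  exact (mul_eq_zero.mp h).resolve_left (sub_ne_zero.mpr hab.symm)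

theorem vandermonde_mul_bezMat_mul_transpose {n : ℕ} {P : R[X]} (Q : R[X]) {v : Fin n → R}
    (hv : Function.Injective v) (hroot : ∀ i, P.IsRoot (v i)) (hP : P.natDegree ≤ n)
    (hQ : Q.natDegree ≤ n) :
    vandermonde v * bezMat n P Q * (vandermonde v)ᵀ
      = diagonal fun i => (derivative P).eval (v i) * Q.eval (v i) := by
  ext i j
  rw [vandermonde_mul_bezMat_mul_transpose_apply hP hQ]
  rcases eq_or_ne i j with rfl | hij
  · rw [diagonal_apply_eq, evalEval_bezPoly_self_of_isRoot Q (hroot i)]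
  · rw [diagonal_apply_ne _ hij,
      evalEval_bezPoly_of_isRoot_of_ne Q (hroot j) (hroot i) (hv.ne hij.symm)]

theorem det_bezMat_prod_X_sub_C {n : ℕ} {v : Fin n → R} (hv : Function.Injective v) (Q : R[X])
    (hQ : Q.natDegree ≤ n) :
    (bezMat n (∏ i, (X - C (v i))) Q).det = (-1) ^ (n * (n - 1) / 2) * ∏ i, Q.eval (v i) := by
  rw [← Lagrange.nodal_eq]
  have hroot (i : Fin n) : (Lagrange.nodal univ v).IsRoot (v i) :=
    Lagrange.eval_nodal_at_node (mem_univ i)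
  have hderiv (i : Fin n) :
      (derivative (Lagrange.nodal univ v)).eval (v i) = ∏ j ∈ univ.erase i, (v i - v j) := by
    rw [Lagrange.eval_nodal_derivative_eval_node_eq (mem_univ i), Lagrange.eval_nodal]
  have hP : (Lagrange.nodal univ v).natDegree ≤ n := by
    rw [Lagrange.natDegree_nodal, card_univ, Fintype.card_fin]
  refine mul_left_cancel₀ (pow_ne_zero 2 (det_vandermonde_ne_zero_iff.mpr hv)) ?_
  calc (vandermonde v).det ^ 2 * (bezMat n (Lagrange.nodal univ v) Q).det
      = (vandermonde v * bezMat n (Lagrange.nodal univ v) Q * (vandermonde v)ᵀ).det := by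
        rw [det_mul, det_mul, det_transpose]; ring
    _ = (∏ i, ∏ j ∈ univ.erase i, (v i - v j)) * ∏ i, Q.eval (v i) := by
        rw [vandermonde_mul_bezMat_mul_transpose Q hv hroot hP hQ, det_diagonal]
        simp only [hderiv, prod_mul_distrib]
    _ = (vandermonde v).det ^ 2 * ((-1) ^ (n * (n - 1) / 2) * ∏ i, Q.eval (v i)) := by
        rw [prod_prod_erase_sub_eq_det_vandermonde_sq]; ring

end IsDomain

/-- For a monic `P` of degree `n` with distinct real roots `x₁,…,x_n` and `Q`
of degree at most `n`,
`det B(P,Q) = (-1)^{n(n-1)/2} Π_i Q(x_i)`; in particular `det B(P,Q) = 0` iff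
`P` and `Q` share a root. -/
theorem bezMat_det (n : ℕ) (x : Fin n → ℝ) (hx : Function.Injective x)
    (P Q : ℝ[X]) (hP : P = ∏ i, (X - C (x i))) (hQ : Q.degree ≤ n) :
    (bezMat n P Q).det = (-1) ^ (n * (n - 1) / 2) * ∏ i, Q.eval (x i) ∧
      ((bezMat n P Q).det = 0 ↔ ∃ z : ℝ, P.eval z = 0 ∧ Q.eval z = 0) := by
  subst hP
  have hdet := det_bezMat_prod_X_sub_C hx Q (natDegree_le_iff_degree_le.mpr hQ)
  refine ⟨hdet, ?_⟩
  simp [hdet, eval_prod, prod_eq_zero_iff, sub_eq_zero]
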